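/- For all natural numbers m, n and every real number x, one has L (m·n) x (-1) = L m (L n x (-1)) (-1). -/
import Mathlib

/-- Bivariate Lucas polynomials. -/
def L : ℕ → ℝ → ℝ → ℝ
  | 0, _, _ => 2
  | 1, x, _ => x
  | n + 2, x, s => x * L (n + 1) x s + s * L n x s

open Polynomial Polynomial.Chebyshev in
lemma L_eq_cheb (x : ℝ) : ∀ n : ℕ, L n x (-1) = 2 * (T ℝ n).eval (x / 2)
  | 0 => by simp [L]
  | 1 => by simp [L]; ring
  | n + 2 => by
    rw [L, L_eq_cheb x (n + 1), L_eq_cheb x n]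
    have := Polynomial.Chebyshev.T_add_two ℝ (n : ℤ)
    push_cast
    rw [this]
    simp [Polynomial.eval_mul, Polynomial.eval_sub]
    ring

open Polynomial Polynomial.Chebyshev in
theorem stmt_17 (m n : ℕ) (x : ℝ) :
    L (m * n) x (-1) = L m (L n x (-1)) (-1) := by
  rw [L_eq_cheb, L_eq_cheb, L_eq_cheb]
  push_cast
  rw [Polynomial.Chebyshev.T_mul, Polynomial.eval_comp]
  ring_nf
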